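/- arXiv:2507.19694 — 3 statements merged into one kernel-verified Lean document; each statement's English description precedes it below -/
import Mathlib

section
/- (Mann iteration with vanishing steps) Let E be a real Banach space, q ∈ [0,1), T : E → E a q-contraction, and u* ∈ E a fixed point of T. Define the Mann iterates with step sizes α_n = 1/(n+1): u₀ ∈ E arbitrary and u_{n+1} = (1 − 1/(n+1))·u_n + (1/(n+1))·T(u_n). Then for every n ≥ 1, ‖u_n − u*‖ ≤ (n+1)^{−(1−q)} · ‖u₀ − u*‖; in particular the Mann iterates converge to u* at a polynomial (sublinear) rate. -/
open Filter

/-- Auxiliary: `(1 - β t)(1+t)^β ≤ 1` for `β, t ≥ 0`. -/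
lemma mann_aux (β t : ℝ) (hβ : 0 ≤ β) (ht : 0 ≤ t) :
    (1 - β * t) * (1 + t) ^ β ≤ 1 := by
  have h1t : (0:ℝ) < 1 + t := by linarith
  have hpow : (1 + t) ^ β ≤ Real.exp (β * t) := by
    rw [Real.rpow_def_of_pos h1t]
    apply Real.exp_le_exp.2
    have hlog : Real.log (1 + t) ≤ t := by
      have := Real.log_le_sub_one_of_pos h1t
      linarith
    nlinarith
  rcases le_or_gt (1 - β * t) 0 with h | h
  · have : (1 - β * t) * (1 + t) ^ β ≤ 0 :=
      mul_nonpos_of_nonpos_of_nonneg h (Real.rpow_nonneg h1t.le β)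
    linarith
  · have h2 : (1 - β * t) ≤ Real.exp (-(β * t)) := by
      have := Real.add_one_le_exp (-(β * t)); linarith
    calc (1 - β * t) * (1 + t) ^ β
        ≤ Real.exp (-(β * t)) * Real.exp (β * t) :=
          mul_le_mul h2 hpow (Real.rpow_nonneg h1t.le β) (Real.exp_nonneg _)
      _ = 1 := by rw [← Real.exp_add]; simp

/-- **Mann iteration with vanishing step sizes `α_n = 1/(n+1)`.**  For a `q`-contraction `T`
on a real Banach space with fixed point `u⋆`, the Mann iterates
`u_{n+1} = (1 − 1/(n+1)) u_n + (1/(n+1)) T u_n` satisfy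
`‖u_n − u⋆‖ ≤ (n+1)^{−(1−q)} ‖u₀ − u⋆‖` for all `n ≥ 1`; in particular they converge to
`u⋆` at a polynomial (sublinear) rate. -/
theorem mann_iteration_vanishing_steps
    {E : Type*} [NormedAddCommGroup E] [NormedSpace ℝ E] [CompleteSpace E]
    (q : ℝ) (hq0 : 0 ≤ q) (hq1 : q < 1)
    (T : E → E) (hT : ∀ x y : E, ‖T x - T y‖ ≤ q * ‖x - y‖)
    (ustar : E) (hfix : T ustar = ustar)
    (u : ℕ → E)
    (hrec : ∀ n : ℕ, u (n + 1) =
      (1 - 1 / ((n : ℝ) + 1)) • u n + (1 / ((n : ℝ) + 1)) • T (u n)) :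
    (∀ n : ℕ, 1 ≤ n → ‖u n - ustar‖ ≤ ((n : ℝ) + 1) ^ (-(1 - q)) * ‖u 0 - ustar‖) ∧
    Tendsto u atTop (nhds ustar) := by
  have hβ0 : 0 < 1 - q := by linarith
  set C : ℝ := ‖u 0 - ustar‖ with hC
  have hC0 : 0 ≤ C := norm_nonneg _
  -- one-step contraction estimate
  have step : ∀ n : ℕ, ‖u (n + 1) - ustar‖ ≤ (1 - (1 - q) / ((n:ℝ) + 1)) * ‖u n - ustar‖ := by
    intro n
    have hn1 : (0:ℝ) < (n:ℝ) + 1 := by positivity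
    have hα0 : (0:ℝ) ≤ 1 / ((n:ℝ) + 1) := by positivity
    have hα1 : 1 / ((n:ℝ) + 1) ≤ 1 := by
      rw [div_le_one hn1]; linarith [Nat.cast_nonneg (α := ℝ) n]
    have key : u (n + 1) - ustar =
        (1 - 1 / ((n:ℝ) + 1)) • (u n - ustar) + (1 / ((n:ℝ) + 1)) • (T (u n) - ustar) := by
      rw [hrec n]; module
    calc ‖u (n + 1) - ustar‖
        ≤ ‖(1 - 1 / ((n:ℝ) + 1)) • (u n - ustar)‖ + ‖(1 / ((n:ℝ) + 1)) • (T (u n) - ustar)‖ := by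
          rw [key]; exact norm_add_le _ _
      _ = (1 - 1 / ((n:ℝ) + 1)) * ‖u n - ustar‖ + (1 / ((n:ℝ) + 1)) * ‖T (u n) - ustar‖ := by
          rw [norm_smul, norm_smul, Real.norm_eq_abs, Real.norm_eq_abs,
            abs_of_nonneg (by linarith), abs_of_nonneg hα0]
      _ ≤ (1 - 1 / ((n:ℝ) + 1)) * ‖u n - ustar‖ + (1 / ((n:ℝ) + 1)) * (q * ‖u n - ustar‖) := by
          gcongr
          calc ‖T (u n) - ustar‖ = ‖T (u n) - T ustar‖ := by rw [hfix]
            _ ≤ q * ‖u n - ustar‖ := hT _ _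
      _ = (1 - (1 - q) / ((n:ℝ) + 1)) * ‖u n - ustar‖ := by field_simp; ring
  -- the main polynomial bound, by induction
  have main : ∀ n : ℕ, 1 ≤ n → ‖u n - ustar‖ ≤ ((n : ℝ) + 1) ^ (-(1 - q)) * C := by
    intro n hn
    induction n with
    | zero => omega
    | succ m ih =>
      rcases Nat.eq_or_lt_of_le hn with h1 | h1
      · -- base case m = 0 : u 1 = T (u 0)
        have hm : m = 0 := by omega
        subst hm
        have hu1 : u 1 = T (u 0) := by
          have := hrec 0
          norm_num at this
          simpa using this
        have hq2 : q ≤ (2:ℝ) ^ (-(1 - q)) := by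
          have hlog2 : Real.log 2 ≤ 1 := by
            have := Real.log_le_sub_one_of_pos (by norm_num : (0:ℝ) < 2); linarith
          have heq : (2:ℝ) ^ (-(1 - q)) = Real.exp (-(1 - q) * Real.log 2) := by
            rw [Real.rpow_def_of_pos (by norm_num : (0:ℝ) < 2), mul_comm]
          rw [heq]
          have h1 : -(1 - q) * Real.log 2 + 1 ≤ Real.exp (-(1 - q) * Real.log 2) :=
            Real.add_one_le_exp _
          have h2 : -(1 - q) ≤ -(1 - q) * Real.log 2 := by nlinarith
          linarith
        have : ‖u 1 - ustar‖ ≤ (2:ℝ) ^ (-(1 - q)) * C := by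
          calc ‖u 1 - ustar‖ = ‖T (u 0) - T ustar‖ := by rw [hu1, hfix]
            _ ≤ q * C := hT _ _
            _ ≤ (2:ℝ) ^ (-(1 - q)) * C := mul_le_mul_of_nonneg_right hq2 hC0
        convert this using 3
        push_cast; norm_num
      · -- inductive step, m ≥ 1
        have hm : 1 ≤ m := by omega
        have ihm := ih hm
        have hm1 : (0:ℝ) < (m:ℝ) + 1 := by positivity
        set t : ℝ := 1 / ((m:ℝ) + 1) with htdef
        have ht : (0:ℝ) ≤ t := by positivity
        have h1t : (0:ℝ) < 1 + t := by linarith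
        have hβt : (1 - q) * t ≤ 1 := by
          have h' : t ≤ 1 := by rw [htdef, div_le_one hm1]; linarith [Nat.cast_nonneg (α := ℝ) m]
          nlinarith
        have hfac : (0:ℝ) ≤ 1 - (1 - q) / ((m:ℝ) + 1) := by
          rw [div_eq_mul_one_div, ← htdef]; linarith
        have haux := mann_aux (1 - q) t hβ0.le ht
        have h3 : 1 - (1 - q) * t ≤ (1 + t) ^ (-(1 - q)) := by
          rw [Real.rpow_neg h1t.le, inv_eq_one_div, le_div_iff₀ (by positivity)]
          exact haux
        have hsplit : ((m:ℝ) + 1 + 1 : ℝ) = ((m:ℝ) + 1) * (1 + t) := by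
          rw [htdef]; field_simp
        have key : (1 - (1 - q) / ((m:ℝ) + 1)) * ((m:ℝ) + 1) ^ (-(1 - q)) ≤
            ((m:ℝ) + 1 + 1) ^ (-(1 - q)) := by
          rw [hsplit, Real.mul_rpow hm1.le h1t.le, div_eq_mul_one_div, ← htdef]
          calc (1 - (1 - q) * t) * ((m:ℝ) + 1) ^ (-(1 - q))
              ≤ (1 + t) ^ (-(1 - q)) * ((m:ℝ) + 1) ^ (-(1 - q)) :=
                mul_le_mul_of_nonneg_right h3 (Real.rpow_nonneg hm1.le _)
            _ = ((m:ℝ) + 1) ^ (-(1 - q)) * (1 + t) ^ (-(1 - q)) := mul_comm _ _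
        calc ‖u (m + 1) - ustar‖ ≤ (1 - (1 - q) / ((m:ℝ) + 1)) * ‖u m - ustar‖ := step m
          _ ≤ (1 - (1 - q) / ((m:ℝ) + 1)) * (((m:ℝ) + 1) ^ (-(1 - q)) * C) :=
              mul_le_mul_of_nonneg_left ihm hfac
          _ = ((1 - (1 - q) / ((m:ℝ) + 1)) * ((m:ℝ) + 1) ^ (-(1 - q))) * C := by ring
          _ ≤ ((m:ℝ) + 1 + 1) ^ (-(1 - q)) * C := mul_le_mul_of_nonneg_right key hC0
          _ = (((m + 1 : ℕ) : ℝ) + 1) ^ (-(1 - q)) * C := by push_cast; ring_nf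
  refine ⟨main, ?_⟩
  -- convergence
  have htend : Tendsto (fun n : ℕ => ((n:ℝ) + 1) ^ (-(1 - q)) * C) atTop (nhds 0) := by
    have h1 : Tendsto (fun n : ℕ => ((n:ℝ) + 1)) atTop atTop :=
      tendsto_atTop_add_const_right atTop 1 tendsto_natCast_atTop_atTop
    have h2 := (tendsto_rpow_neg_atTop hβ0).comp h1
    simpa using h2.mul_const C
  have hzero : Tendsto (fun n => u n - ustar) atTop (nhds 0) := by
    apply squeeze_zero_norm' _ htend
    filter_upwards [eventually_ge_atTop 1] with n hn
    exact main n hn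
  have := hzero.add_const ustar
  simpa using this
end

section
/- (Ishikawa iteration) Let E be a real Banach space, q ∈ [0,1), T : E → E a q-contraction, u* ∈ E a fixed point of T, and α ∈ (0,1], β ∈ [0,1]. Define the Ishikawa iterates by u₀ ∈ E, v_n = (1−β)·u_n + β·T(u_n), and u_{n+1} = (1−α)·u_n + α·T(v_n). Then the constant c := 1 − α·(1 − q·(1−β+β·q)) satisfies c ∈ [0,1), ‖u_n − u*‖ ≤ c^n · ‖u₀ − u*‖ for all n, and u_n → u*. -/
open Filter

/-- **Ishikawa iteration.**  For a `q`-contraction `T` on a real Banach space with fixed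
point `u⋆` and parameters `α ∈ (0,1]`, `β ∈ [0,1]`, the Ishikawa iterates
`v_n = (1−β) u_n + β T u_n`, `u_{n+1} = (1−α) u_n + α T v_n` converge geometrically to
`u⋆` with rate `c = 1 − α (1 − q (1 − β + β q)) ∈ [0,1)`. -/
theorem ishikawa_iteration
    {E : Type*} [NormedAddCommGroup E] [NormedSpace ℝ E] [CompleteSpace E]
    (q : ℝ) (hq0 : 0 ≤ q) (hq1 : q < 1)
    (T : E → E) (hT : ∀ x y : E, ‖T x - T y‖ ≤ q * ‖x - y‖)
    (ustar : E) (hfix : T ustar = ustar)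
    (α β : ℝ) (hα0 : 0 < α) (hα1 : α ≤ 1) (hβ0 : 0 ≤ β) (hβ1 : β ≤ 1)
    (u v : ℕ → E)
    (hv : ∀ n, v n = (1 - β) • u n + β • T (u n))
    (hu : ∀ n, u (n + 1) = (1 - α) • u n + α • T (v n)) :
    (0 ≤ 1 - α * (1 - q * (1 - β + β * q)) ∧ 1 - α * (1 - q * (1 - β + β * q)) < 1) ∧
    (∀ n, ‖u n - ustar‖ ≤ (1 - α * (1 - q * (1 - β + β * q))) ^ n * ‖u 0 - ustar‖) ∧
    Tendsto u atTop (nhds ustar) := by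
  set r : ℝ := 1 - β + β * q with hr
  set c : ℝ := 1 - α * (1 - q * r) with hc
  have hr0 : 0 ≤ r := by nlinarith
  have hr1 : r ≤ 1 := by nlinarith
  have hqr0 : 0 ≤ q * r := mul_nonneg hq0 hr0
  have hqr1 : q * r < 1 := by nlinarith
  have hc0 : 0 ≤ c := by nlinarith
  have hc1 : c < 1 := by nlinarith
  -- one-step contraction
  have key : ∀ n, ‖u (n + 1) - ustar‖ ≤ c * ‖u n - ustar‖ := by
    intro n
    have hvn : ‖v n - ustar‖ ≤ r * ‖u n - ustar‖ := by
      have : v n - ustar = (1 - β) • (u n - ustar) + β • (T (u n) - ustar) := by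
        rw [hv n]; module
      rw [this]
      calc ‖(1 - β) • (u n - ustar) + β • (T (u n) - ustar)‖
          ≤ ‖(1 - β) • (u n - ustar)‖ + ‖β • (T (u n) - ustar)‖ := norm_add_le _ _
        _ = (1 - β) * ‖u n - ustar‖ + β * ‖T (u n) - ustar‖ := by
            rw [norm_smul, norm_smul, Real.norm_eq_abs, Real.norm_eq_abs,
              abs_of_nonneg (by linarith), abs_of_nonneg hβ0]
        _ ≤ (1 - β) * ‖u n - ustar‖ + β * (q * ‖u n - ustar‖) := by
            have := hT (u n) ustar
            rw [hfix] at this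
            nlinarith
        _ = r * ‖u n - ustar‖ := by ring
    have hstep : u (n + 1) - ustar = (1 - α) • (u n - ustar) + α • (T (v n) - ustar) := by
      rw [hu n]; module
    have hTv : ‖T (v n) - ustar‖ ≤ q * ‖v n - ustar‖ := by
      have := hT (v n) ustar; rwa [hfix] at this
    calc ‖u (n + 1) - ustar‖
        = ‖(1 - α) • (u n - ustar) + α • (T (v n) - ustar)‖ := by rw [hstep]
      _ ≤ ‖(1 - α) • (u n - ustar)‖ + ‖α • (T (v n) - ustar)‖ := norm_add_le _ _
      _ = (1 - α) * ‖u n - ustar‖ + α * ‖T (v n) - ustar‖ := by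
          rw [norm_smul, norm_smul, Real.norm_eq_abs, Real.norm_eq_abs,
            abs_of_nonneg (by linarith), abs_of_nonneg hα0.le]
      _ ≤ (1 - α) * ‖u n - ustar‖ + α * (q * (r * ‖u n - ustar‖)) := by
          have h1 : q * ‖v n - ustar‖ ≤ q * (r * ‖u n - ustar‖) :=
            mul_le_mul_of_nonneg_left hvn hq0
          have h2 : α * ‖T (v n) - ustar‖ ≤ α * (q * (r * ‖u n - ustar‖)) :=
            mul_le_mul_of_nonneg_left (hTv.trans h1) hα0.le
          linarith
      _ = c * ‖u n - ustar‖ := by ring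
  have geom : ∀ n, ‖u n - ustar‖ ≤ c ^ n * ‖u 0 - ustar‖ := by
    intro n
    induction n with
    | zero => simp
    | succ n ih =>
        calc ‖u (n + 1) - ustar‖ ≤ c * ‖u n - ustar‖ := key n
          _ ≤ c * (c ^ n * ‖u 0 - ustar‖) := by nlinarith
          _ = c ^ (n + 1) * ‖u 0 - ustar‖ := by ring
  refine ⟨⟨hc0, hc1⟩, geom, ?_⟩
  rw [tendsto_iff_norm_sub_tendsto_zero]
  have hlim : Tendsto (fun n => c ^ n * ‖u 0 - ustar‖) atTop (nhds 0) := by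
    simpa using (tendsto_pow_atTop_nhds_zero_of_lt_one hc0 hc1).mul_const ‖u 0 - ustar‖
  exact squeeze_zero (fun n => norm_nonneg _) geom hlim
end

section
/- (Browder–Göhde–Kirk fixed point theorem) Let H be a real Hilbert space and C ⊆ H a nonempty, closed, bounded, convex subset. Then every nonexpansive map T : C → C, i.e. every map satisfying ‖T x − T y‖ ≤ ‖x − y‖ for all x, y ∈ C, has a fixed point: there exists u ∈ C with T u = u. -/
open Filter Metric

set_option maxHeartbeats 2000000 in
/-- **Browder–Göhde–Kirk fixed point theorem.**  Every nonexpansive self-map of a nonempty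
closed bounded convex subset of a real Hilbert space has a fixed point. -/
theorem browder_gohde_kirk
    {H : Type*} [NormedAddCommGroup H] [InnerProductSpace ℝ H] [CompleteSpace H]
    (C : Set H) (hne : C.Nonempty) (hclosed : IsClosed C)
    (hbdd : Bornology.IsBounded C) (hconv : Convex ℝ C)
    (T : H → H) (hmaps : Set.MapsTo T C C)
    (hnonexp : ∀ x ∈ C, ∀ y ∈ C, ‖T x - T y‖ ≤ ‖x - y‖) :
    ∃ u ∈ C, T u = u := by
  classical
  obtain ⟨x₀, hx₀⟩ := hne
  haveI : Nonempty ↥C := ⟨⟨x₀, hx₀⟩⟩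
  haveI : CompleteSpace ↥C := hclosed.completeSpace_coe
  -- a bound on the norm of elements of C
  obtain ⟨R, hRC⟩ := hbdd.subset_closedBall 0
  have hR : ∀ x ∈ C, ‖x‖ ≤ R := by
    intro x hx
    have := hRC hx
    rwa [Metric.mem_closedBall, dist_zero_right] at this
  have hR0 : 0 ≤ R := le_trans (norm_nonneg x₀) (hR x₀ hx₀)
  have hdiam : ∀ x ∈ C, ∀ y ∈ C, ‖x - y‖ ≤ 2 * R := by
    intro x hx y hy
    calc ‖x - y‖ ≤ ‖x‖ + ‖y‖ := norm_sub_le x y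
    _ ≤ 2 * R := by linarith [hR x hx, hR y hy]
  -- Step 1: approximate fixed points via Banach contractions
  have key : ∀ n : ℕ, ∃ z ∈ C,
      z = ((n : ℝ) + 1)⁻¹ • x₀ + (1 - ((n : ℝ) + 1)⁻¹) • T z := by
    intro n
    set ε : ℝ := ((n : ℝ) + 1)⁻¹ with hεdef
    have hε0 : 0 < ε := by positivity
    have hε1 : ε ≤ 1 := by
      rw [hεdef, inv_le_one_iff₀]
      right; linarith [Nat.cast_nonneg (α := ℝ) n]
    have hmem : ∀ x : ↥C, ε • x₀ + (1 - ε) • T x ∈ C := fun x =>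
      hconv hx₀ (hmaps x.2) hε0.le (by linarith) (by ring)
    set S : ↥C → ↥C := fun x => ⟨ε • x₀ + (1 - ε) • T x, hmem x⟩ with hS
    have hK0 : (0:ℝ) ≤ 1 - ε := by linarith
    have hcontr : ContractingWith ⟨1 - ε, hK0⟩ S := by
      constructor
      · exact_mod_cast show (1 : ℝ) - ε < 1 by linarith
      · apply LipschitzWith.of_dist_le_mul
        intro x y
        have h1 : dist (S x) (S y) = ‖(1 - ε) • (T x - T y)‖ := by
          rw [Subtype.dist_eq, dist_eq_norm, hS]
          congr 1
          simp only []
          rw [smul_sub]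
          abel
        rw [h1, norm_smul, Real.norm_eq_abs, abs_of_nonneg hK0, Subtype.dist_eq, dist_eq_norm]
        exact mul_le_mul_of_nonneg_left (hnonexp x x.2 y y.2) hK0
    refine ⟨(hcontr.fixedPoint S).1, (hcontr.fixedPoint S).2, ?_⟩
    have := hcontr.fixedPoint_isFixedPt (f := S)
    conv_lhs => rw [← this]
  choose u huC hufix using key
  -- approximate fixed point property
  have happrox : ∀ n : ℕ, ‖u n - T (u n)‖ ≤ 2 * R * ((n : ℝ) + 1)⁻¹ := by
    intro n
    have h2 : u n - T (u n) = ((n : ℝ) + 1)⁻¹ • (x₀ - T (u n)) := by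
      nth_rewrite 1 [hufix n]
      rw [smul_sub]
      module
    rw [h2, norm_smul, Real.norm_eq_abs, abs_of_nonneg (by positivity)]
    rw [mul_comm (2 * R)]
    exact mul_le_mul_of_nonneg_left (hdiam x₀ hx₀ _ (hmaps (huC n))) (by positivity)
  -- the asymptotic-center functional
  set φ : H → ℝ := fun x => limsup (fun n => ‖u n - x‖ ^ 2) atTop with hφdef
  have hb : ∀ x ∈ C, ∀ n : ℕ, ‖u n - x‖ ^ 2 ≤ (2 * R) ^ 2 := by
    intro x hx n
    have := hdiam (u n) (huC n) x hx
    nlinarith [norm_nonneg (u n - x)]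
  have hBdd : ∀ x ∈ C, IsBoundedUnder (· ≤ ·) atTop (fun n => ‖u n - x‖ ^ 2) :=
    fun x hx => isBoundedUnder_of ⟨(2 * R) ^ 2, fun n => hb x hx n⟩
  have hCob : ∀ x : H, IsCoboundedUnder (· ≤ ·) atTop (fun n => ‖u n - x‖ ^ 2) :=
    fun x => (isBoundedUnder_of (f := atTop) (u := fun n => ‖u n - x‖ ^ 2)
      ⟨0, fun n => sq_nonneg _⟩ : IsBoundedUnder (· ≥ ·) atTop _).isCoboundedUnder_le
  have hφ0 : ∀ x ∈ C, 0 ≤ φ x := fun x hx =>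
    le_limsup_of_frequently_le (Frequently.of_forall fun n => sq_nonneg _) (hBdd x hx)
  -- helper for limsup upper bounds
  have hle : ∀ (f : ℕ → ℝ) (a : ℝ), IsCoboundedUnder (· ≤ ·) atTop f →
      (∀ ε : ℝ, 0 < ε → ∀ᶠ n in atTop, f n ≤ a + ε) → limsup f atTop ≤ a := by
    intro f a hco h
    by_contra hlt
    push_neg at hlt
    have hε : (0:ℝ) < (limsup f atTop - a) / 2 := by linarith
    have := limsup_le_of_le hco (h _ hε)
    linarith
  -- Lipschitz-type bound for φ
  have hLip : ∀ x ∈ C, ∀ y ∈ C, φ x ≤ φ y + ‖x - y‖ * (4 * R + ‖x - y‖) := by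
    intro x hx y hy
    refine hle _ _ (hCob x) fun ε hε => ?_
    have h1 : ∀ᶠ n in atTop, ‖u n - y‖ ^ 2 < φ y + ε :=
      eventually_lt_of_limsup_lt (by linarith [lt_add_of_pos_right (φ y) hε]) (hBdd y hy)
    filter_upwards [h1] with n hn
    have ha : ‖u n - x‖ ≤ ‖u n - y‖ + ‖x - y‖ := by
      have h' := dist_triangle (u n) y x
      simp only [dist_eq_norm] at h'
      rw [norm_sub_rev y x] at h'
      exact h'
    have hb2 : ‖u n - y‖ ≤ 2 * R := hdiam (u n) (huC n) y hy
    nlinarith [norm_nonneg (u n - x), norm_nonneg (u n - y), norm_nonneg (x - y)]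
  -- strong convexity of φ
  have hSC : ∀ x ∈ C, ∀ z ∈ C,
      φ ((2:ℝ)⁻¹ • x + (2:ℝ)⁻¹ • z) ≤ (φ x + φ z) / 2 - ‖x - z‖ ^ 2 / 4 := by
    intro x hx z hz
    have hid : ∀ n : ℕ, ‖u n - ((2:ℝ)⁻¹ • x + (2:ℝ)⁻¹ • z)‖ ^ 2 =
        (‖u n - x‖ ^ 2 + ‖u n - z‖ ^ 2) / 2 - ‖x - z‖ ^ 2 / 4 := by
      intro n
      have hp := parallelogram_law_with_norm ℝ (u n - x) (u n - z)
      have e1 : (u n - x) + (u n - z) = (2:ℝ) • (u n - ((2:ℝ)⁻¹ • x + (2:ℝ)⁻¹ • z)) := by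
        module
      have e2 : (u n - x) - (u n - z) = z - x := by abel
      rw [e1, e2, norm_smul, Real.norm_ofNat, norm_sub_rev z x] at hp
      nlinarith [hp]
    refine hle _ _ (hCob _) fun ε hε => ?_
    have h1 : ∀ᶠ n in atTop, ‖u n - x‖ ^ 2 < φ x + ε :=
      eventually_lt_of_limsup_lt (by linarith) (hBdd x hx)
    have h2 : ∀ᶠ n in atTop, ‖u n - z‖ ^ 2 < φ z + ε :=
      eventually_lt_of_limsup_lt (by linarith) (hBdd z hz)
    filter_upwards [h1, h2] with n hn1 hn2
    rw [hid n]
    linarith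
  -- the infimum of φ on C
  set S : Set ℝ := φ '' C with hSdef
  have hSne : S.Nonempty := ⟨φ x₀, ⟨x₀, hx₀, rfl⟩⟩
  have hSbdd : BddBelow S := ⟨0, by rintro _ ⟨x, hx, rfl⟩; exact hφ0 x hx⟩
  set m : ℝ := sInf S with hmdef
  have hm_le : ∀ x ∈ C, m ≤ φ x := fun x hx => csInf_le hSbdd ⟨x, hx, rfl⟩
  -- a minimizing sequence
  have hmin : ∀ k : ℕ, ∃ y ∈ C, φ y < m + ((k : ℝ) + 1)⁻¹ := by
    intro k
    have h : sInf S < m + ((k : ℝ) + 1)⁻¹ := by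
      rw [← hmdef]
      have : (0:ℝ) < ((k : ℝ) + 1)⁻¹ := by positivity
      linarith
    rw [csInf_lt_iff hSbdd hSne] at h
    obtain ⟨b, ⟨x, hx, rfl⟩, hb'⟩ := h
    exact ⟨x, hx, hb'⟩
  choose y hyC hy using hmin
  -- the minimizing sequence is Cauchy
  have hcauchy : CauchySeq y := by
    refine cauchySeq_of_le_tendsto_0 (fun N => Real.sqrt (4 * ((N : ℝ) + 1)⁻¹)) ?_ ?_
    · intro j k N hj hk
      have hmid : (2:ℝ)⁻¹ • y j + (2:ℝ)⁻¹ • y k ∈ C :=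
        hconv (hyC j) (hyC k) (by norm_num) (by norm_num) (by norm_num)
      have h1 := hSC (y j) (hyC j) (y k) (hyC k)
      have h2 := hm_le _ hmid
      have h3 : ‖y j - y k‖ ^ 2 ≤ 2 * (((j : ℝ) + 1)⁻¹ + ((k : ℝ) + 1)⁻¹) := by
        have := hy j
        have := hy k
        linarith
      have h4 : ((j : ℝ) + 1)⁻¹ ≤ ((N : ℝ) + 1)⁻¹ := by
        apply inv_anti₀ (by positivity)
        have : (N : ℝ) ≤ (j : ℝ) := Nat.cast_le.mpr hj
        linarith
      have h5 : ((k : ℝ) + 1)⁻¹ ≤ ((N : ℝ) + 1)⁻¹ := by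
        apply inv_anti₀ (by positivity)
        have : (N : ℝ) ≤ (k : ℝ) := Nat.cast_le.mpr hk
        linarith
      rw [dist_eq_norm]
      rw [Real.le_sqrt (norm_nonneg _) (by positivity)]
      linarith
    · have h0 : Filter.Tendsto (fun N : ℕ => 4 * ((N : ℝ) + 1)⁻¹) atTop (nhds 0) := by
        have := tendsto_one_div_add_atTop_nhds_zero_nat.const_mul (4:ℝ)
        simpa [one_div, mul_comm] using this
      have := h0.sqrt
      simpa using this
  obtain ⟨v, hv⟩ := cauchySeq_tendsto_of_complete hcauchy
  have hvC : v ∈ C := hclosed.mem_of_tendsto hv (Eventually.of_forall hyC)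
  -- φ attains its infimum at v
  have hφv : φ v = m := by
    refine le_antisymm ?_ (hm_le v hvC)
    have hk : ∀ k : ℕ, φ v ≤ φ (y k) + ‖v - y k‖ * (4 * R + ‖v - y k‖) :=
      fun k => hLip v hvC (y k) (hyC k)
    have hyto : Tendsto (fun k => φ (y k)) atTop (nhds m) := by
      apply tendsto_of_tendsto_of_tendsto_of_le_of_le (g := fun _ => m)
        (h := fun k : ℕ => m + ((k : ℝ) + 1)⁻¹) tendsto_const_nhds
      · have := tendsto_one_div_add_atTop_nhds_zero_nat.const_add m
        simpa [one_div] using this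
      · exact fun k => hm_le _ (hyC k)
      · exact fun k => (hy k).le
    have hnto : Tendsto (fun k => ‖v - y k‖) atTop (nhds 0) := by
      have : Tendsto (fun k => v - y k) atTop (nhds (v - v)) := tendsto_const_nhds.sub hv
      rw [sub_self] at this
      simpa using this.norm
    have htend : Tendsto (fun k => φ (y k) + ‖v - y k‖ * (4 * R + ‖v - y k‖)) atTop
        (nhds (m + 0 * (4 * R + 0))) :=
      hyto.add (hnto.mul (tendsto_const_nhds.add hnto))
    have := ge_of_tendsto' htend hk
    simpa using this
  -- T v also minimizes φ
  have hTv : φ (T v) ≤ m := by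
    rw [← hφv]
    refine hle _ _ (hCob _) fun ε hε => ?_
    have h1 : ∀ᶠ n in atTop, ‖u n - v‖ ^ 2 < φ v + ε / 2 :=
      eventually_lt_of_limsup_lt (by linarith) (hBdd v hvC)
    have h2 : ∀ᶠ (n : ℕ) in atTop, ((n : ℝ) + 1)⁻¹ < ε / (2 * (12 * R ^ 2 + 1)) := by
      have hδ : (0:ℝ) < ε / (2 * (12 * R ^ 2 + 1)) := by positivity
      have := tendsto_one_div_add_atTop_nhds_zero_nat.eventually_lt_const hδ
      simpa [one_div] using this
    filter_upwards [h1, h2] with n hn1 hn2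
    have ha : ‖u n - T v‖ ≤ 2 * R * ((n : ℝ) + 1)⁻¹ + ‖u n - v‖ := by
      have e : u n - T v = (u n - T (u n)) + (T (u n) - T v) := by abel
      rw [e]
      calc ‖(u n - T (u n)) + (T (u n) - T v)‖ ≤ ‖u n - T (u n)‖ + ‖T (u n) - T v‖ :=
            norm_add_le _ _
      _ ≤ 2 * R * ((n : ℝ) + 1)⁻¹ + ‖u n - v‖ :=
            add_le_add (happrox n) (hnonexp (u n) (huC n) v hvC)
    have hbv : ‖u n - v‖ ≤ 2 * R := hdiam (u n) (huC n) v hvC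
    have hεn : (0:ℝ) < ((n : ℝ) + 1)⁻¹ := by positivity
    have hεn1 : ((n : ℝ) + 1)⁻¹ ≤ 1 := by
      rw [inv_le_one_iff₀]; right; linarith [Nat.cast_nonneg (α := ℝ) n]
    have hsq : ‖u n - T v‖ ^ 2 ≤ ‖u n - v‖ ^ 2 + 12 * R ^ 2 * ((n : ℝ) + 1)⁻¹ := by
      have key1 : ‖u n - T v‖ ^ 2 ≤ (2 * R * ((n : ℝ) + 1)⁻¹ + ‖u n - v‖) ^ 2 :=
        pow_le_pow_left₀ (norm_nonneg _) ha 2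
      have e0 : ((n : ℝ) + 1)⁻¹ ^ 2 ≤ ((n : ℝ) + 1)⁻¹ := by nlinarith [hεn, hεn1]
      have e1 : (2 * R * ((n : ℝ) + 1)⁻¹) ^ 2 ≤ 4 * R ^ 2 * ((n : ℝ) + 1)⁻¹ := by
        nlinarith [mul_le_mul_of_nonneg_left e0 (show (0:ℝ) ≤ 4 * R ^ 2 by positivity)]
      have e2 : 2 * (2 * R * ((n : ℝ) + 1)⁻¹) * ‖u n - v‖ ≤ 8 * R ^ 2 * ((n : ℝ) + 1)⁻¹ := by
        nlinarith [mul_le_mul_of_nonneg_left hbv (show (0:ℝ) ≤ 4 * R * ((n : ℝ) + 1)⁻¹ by positivity)]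
      have expand : (2 * R * ((n : ℝ) + 1)⁻¹ + ‖u n - v‖) ^ 2 =
          (2 * R * ((n : ℝ) + 1)⁻¹) ^ 2 + 2 * (2 * R * ((n : ℝ) + 1)⁻¹) * ‖u n - v‖
            + ‖u n - v‖ ^ 2 := by ring
      linarith [key1, e1, e2, expand]
    have h12 : 12 * R ^ 2 * ((n : ℝ) + 1)⁻¹ ≤ ε / 2 := by
      have h' : 12 * R ^ 2 * ((n : ℝ) + 1)⁻¹ ≤ 12 * R ^ 2 * (ε / (2 * (12 * R ^ 2 + 1))) :=
        mul_le_mul_of_nonneg_left hn2.le (by positivity)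
      have h'' : 12 * R ^ 2 * (ε / (2 * (12 * R ^ 2 + 1))) ≤ ε / 2 := by
        have hpos : (0:ℝ) < 12 * R ^ 2 + 1 := by positivity
        have heq : (12 * R ^ 2 + 1) * (ε / (2 * (12 * R ^ 2 + 1))) = ε / 2 := by
          rw [← div_div, mul_comm, div_mul_cancel₀ _ hpos.ne']
        have hmono := mul_le_mul_of_nonneg_right
          (show (12 * R ^ 2 : ℝ) ≤ 12 * R ^ 2 + 1 by linarith)
          (show (0:ℝ) ≤ ε / (2 * (12 * R ^ 2 + 1)) by positivity)
        linarith
      linarith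
    linarith
  -- conclude that T v = v by strong convexity
  have hmidC : (2:ℝ)⁻¹ • v + (2:ℝ)⁻¹ • T v ∈ C :=
    hconv hvC (hmaps hvC) (by norm_num) (by norm_num) (by norm_num)
  have h1 := hSC v hvC (T v) (hmaps hvC)
  have h2 := hm_le _ hmidC
  have h3 : ‖v - T v‖ ^ 2 ≤ 0 := by
    rw [hφv] at h1
    linarith
  have h4 : v - T v = 0 := by
    have := sq_nonneg ‖v - T v‖
    have h5 : ‖v - T v‖ ^ 2 = 0 := le_antisymm h3 this
    have h6 : ‖v - T v‖ = 0 := by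
      nlinarith [norm_nonneg (v - T v)]
    exact norm_eq_zero.mp h6
  exact ⟨v, hvC, (sub_eq_zero.mp h4).symm⟩
end
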